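/- Suppose n is odd and p, q ≥ 1 are integers with p + q ≡ 0 (mod n+1). Then G_{n,p} ≅ G_{n,q} as abelian groups; indeed, the automorphism η of ℤ^n determined by η(e_i) = e_{n+1−i} for 1 ≤ i ≤ n carries the subgroup Im(1 + (−1)^{p+1} φ^p) onto the subgroup Im(1 + (−1)^{q+1} φ^q). -/
import Mathlib


/-- The Coxeter transformation of the linearly oriented Dynkin quiver `A_n`, acting on
`ℤ^n = K_0(D^b(mod K A_n))` in the basis of classes of simple modules:
`φ(e_i) = e_{i+1}` for `1 ≤ i ≤ n-1` and `φ(e_n) = -(e_1 + ⋯ + e_n)`.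
(Here the basis vector `e_i` is `Pi.single ⟨i-1, _⟩ 1`.) -/
noncomputable def phiA (n : ℕ) : Module.End ℤ (Fin n → ℤ) :=
  (Pi.basisFun ℤ (Fin n)).constr ℤ (fun i =>
    if h : (i : ℕ) + 1 < n then Pi.single (⟨(i : ℕ) + 1, h⟩ : Fin n) 1 else fun _ => -1)
/-- The automorphism `η` of `ℤ^n` with `η(e_i) = e_{n+1-i}` for `1 ≤ i ≤ n`
(on `Fin n` indices, `j ↦ n - 1 - j`, i.e. `Fin.rev`). -/
noncomputable def etaA (n : ℕ) : Module.End ℤ (Fin n → ℤ) :=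
  (Pi.basisFun ℤ (Fin n)).constr ℤ (fun i => Pi.single i.rev 1)

lemma phiA_single (n : ℕ) (i : Fin n) :
    phiA n (Pi.single i 1) =
      if h : (i : ℕ) + 1 < n then Pi.single (⟨(i : ℕ) + 1, h⟩ : Fin n) 1 else fun _ => -1 := by
  rw [phiA, ← Pi.basisFun_apply]
  exact Module.Basis.constr_basis _ _ _ _

lemma etaA_single (n : ℕ) (i : Fin n) : etaA n (Pi.single i 1) = Pi.single i.rev 1 := by
  rw [etaA, ← Pi.basisFun_apply]
  exact Module.Basis.constr_basis _ _ _ _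

lemma sum_single (n : ℕ) : ∑ j : Fin n, Pi.single j (1:ℤ) = fun _ => 1 := by
  ext k
  simp [Finset.sum_apply, Pi.single_apply]

lemma etaA_one (n : ℕ) : etaA n (fun _ => (1:ℤ)) = fun _ => 1 := by
  rw [← sum_single n, map_sum]
  simp only [etaA_single]
  rw [show (∑ j : Fin n, Pi.single j.rev (1:ℤ)) = ∑ j : Fin n, Pi.single j (1:ℤ) from
    Fintype.sum_bijective Fin.rev Fin.rev_bijective _ _ (fun _ => rfl), sum_single n]

lemma etaA_neg_one (n : ℕ) : etaA n (fun _ => (-1:ℤ)) = fun _ => -1 := by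
  have h : (fun _ => (-1:ℤ)) = -(fun _ => (1:ℤ) : Fin n → ℤ) := by ext; simp
  rw [h, map_neg, etaA_one]

lemma phiA_one (m : ℕ) : phiA (m+1) (fun _ => (1:ℤ)) = -Pi.single 0 1 := by
  rw [← sum_single (m+1), map_sum]
  simp only [phiA_single]
  rw [Fin.sum_univ_castSucc]
  have h1 : ∀ i : Fin m, ((i.castSucc : Fin (m+1)) : ℕ) + 1 < m + 1 := by
    intro i; simpa using i.isLt
  have h2 : ¬ ((Fin.last m : ℕ) + 1 < m + 1) := by simp
  rw [dif_neg h2]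
  have h3 : ∀ i : Fin m,
      (if h : ((i.castSucc : Fin (m+1)) : ℕ) + 1 < m + 1 then
        Pi.single (⟨(i.castSucc : ℕ) + 1, h⟩ : Fin (m+1)) (1:ℤ) else fun _ => -1)
      = Pi.single i.succ (1:ℤ) := by
    intro i
    rw [dif_pos (h1 i)]
    congr 1
  simp only [h3]
  have h4 : (∑ i : Fin m, Pi.single i.succ (1:ℤ) : Fin (m+1) → ℤ)
      = (fun _ => (1:ℤ)) - Pi.single (0 : Fin (m+1)) (1:ℤ) := by
    have := Fin.sum_univ_succ (fun j : Fin (m+1) => Pi.single j (1:ℤ))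
    rw [sum_single (m+1)] at this
    rw [eq_sub_iff_add_eq, this]; exact add_comm _ _
  rw [h4]
  ext k
  simp [Pi.single_apply]
  ring

lemma phiA_neg_one (m : ℕ) : phiA (m+1) (fun _ => (-1:ℤ)) = Pi.single 0 1 := by
  have h : (fun _ => (-1:ℤ)) = -(fun _ => (1:ℤ) : Fin (m+1) → ℤ) := by ext; simp
  rw [h, map_neg, phiA_one, neg_neg]

lemma phiA_pow_single (m : ℕ) : ∀ k, (h : k < m+1) →
    ((phiA (m+1))^k) (Pi.single (0 : Fin (m+1)) 1) = Pi.single (⟨k, h⟩ : Fin (m+1)) 1 := by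
  intro k
  induction k with
  | zero => intro h; simp
  | succ k ih =>
      intro h
      rw [pow_succ', Module.End.mul_apply, ih (by omega)]
      rw [phiA_single]
      rw [dif_pos (show ((⟨k, by omega⟩ : Fin (m+1)) : ℕ) + 1 < m+1 from h)]

lemma phiA_pow_last (m : ℕ) :
    ((phiA (m+1))^(m+1)) (Pi.single (0 : Fin (m+1)) 1) = fun _ => -1 := by
  rw [pow_succ', Module.End.mul_apply, phiA_pow_single m m (by omega), phiA_single,
    dif_neg (by simp)]

lemma phiA_pow_eq_one (m : ℕ) : (phiA (m+1))^(m+2) = 1 := by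
  apply Module.Basis.ext (Pi.basisFun ℤ (Fin (m+1)))
  intro i
  have hb : (Pi.basisFun ℤ (Fin (m+1))) i = Pi.single i 1 := by simp [Pi.basisFun_apply]
  rw [hb, Module.End.one_apply]
  have hi : Pi.single i (1:ℤ) = ((phiA (m+1))^(i:ℕ)) (Pi.single (0 : Fin (m+1)) 1) := by
    rw [phiA_pow_single m (i:ℕ) i.isLt]
  rw [hi, ← Module.End.mul_apply, pow_mul_comm, Module.End.mul_apply]
  congr 1
  have : ((phiA (m+1))^(m+2)) (Pi.single (0 : Fin (m+1)) 1) = Pi.single 0 1 := by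
    rw [show m+2 = (m+1)+1 from rfl, pow_succ', Module.End.mul_apply, phiA_pow_last,
      phiA_neg_one]
  rw [this]

lemma etaA_sq (n : ℕ) : etaA n * etaA n = 1 := by
  apply Module.Basis.ext (Pi.basisFun ℤ (Fin n))
  intro i
  have hb : (Pi.basisFun ℤ (Fin n)) i = Pi.single i 1 := by simp [Pi.basisFun_apply]
  rw [hb, Module.End.mul_apply, etaA_single, etaA_single, Fin.rev_rev, Module.End.one_apply]

lemma phi_eta_phi (m : ℕ) : phiA (m+1) * etaA (m+1) * phiA (m+1) = etaA (m+1) := by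
  apply Module.Basis.ext (Pi.basisFun ℤ (Fin (m+1)))
  intro i
  have hb : (Pi.basisFun ℤ (Fin (m+1))) i = Pi.single i 1 := by simp [Pi.basisFun_apply]
  rw [hb, Module.End.mul_apply, Module.End.mul_apply, etaA_single]
  rw [phiA_single]
  by_cases h : (i : ℕ) + 1 < m + 1
  · rw [dif_pos h, etaA_single, phiA_single]
    have hrev : ((Fin.rev (⟨(i:ℕ)+1, h⟩ : Fin (m+1)) : Fin (m+1)) : ℕ) = m - 1 - (i:ℕ) := by
      simp [Fin.rev]; omega
    rw [dif_pos (by omega : ((Fin.rev (⟨(i:ℕ)+1, h⟩ : Fin (m+1)) : Fin (m+1)) : ℕ) + 1 < m + 1)]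
    have hidx : (⟨((Fin.rev (⟨(i:ℕ)+1, h⟩ : Fin (m+1)) : Fin (m+1)) : ℕ) + 1, by omega⟩ : Fin (m+1))
        = i.rev := by
      apply Fin.ext
      simp [Fin.rev] at hrev ⊢
      omega
    rw [hidx]
  · rw [dif_neg h, etaA_neg_one, phiA_neg_one]
    have hi := i.isLt
    have hidx : (0 : Fin (m+1)) = i.rev := by
      apply Fin.ext
      simp [Fin.rev]
      omega
    rw [hidx]

lemma phiA_pow_mod (m a : ℕ) : (phiA (m+1))^a = (phiA (m+1))^(a % (m+2)) := by
  conv_lhs => rw [← Nat.div_add_mod a (m+2)]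
  rw [pow_add, pow_mul, phiA_pow_eq_one, one_pow, one_mul]

lemma eta_phi (m : ℕ) : etaA (m+1) * phiA (m+1) = (phiA (m+1))^(m+1) * etaA (m+1) := by
  have h := phi_eta_phi m
  have h2 : (phiA (m+1))^(m+2) * (etaA (m+1) * phiA (m+1))
      = (phiA (m+1))^(m+1) * etaA (m+1) := by
    rw [show (m+2) = (m+1)+1 from rfl, pow_succ, mul_assoc]
    congr 1
  rw [phiA_pow_eq_one, one_mul] at h2
  exact h2

lemma eta_phi_pow (m k : ℕ) :
    etaA (m+1) * (phiA (m+1))^k = (phiA (m+1))^((m+1)*k) * etaA (m+1) := by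
  induction k with
  | zero => simp
  | succ k ih =>
    rw [pow_succ, ← mul_assoc, ih, mul_assoc, eta_phi, ← mul_assoc, ← pow_add,
      show (m+1)*k + (m+1) = (m+1)*(k+1) by ring]

lemma eta_phi_key (m p q : ℕ) (hpq : (p + q) % (m+2) = 0) :
    etaA (m+1) * (phiA (m+1))^p = (phiA (m+1))^q * etaA (m+1) := by
  rw [eta_phi_pow]
  congr 1
  rw [phiA_pow_mod, phiA_pow_mod m q]
  congr 1
  have h1 : (m+2) ∣ p + q := Nat.dvd_of_mod_eq_zero hpq
  have e : (m+1)*p + (p+q) = (m+2)*p + q := by ring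
  have a1 : ((m+1)*p + (p+q)) % (m+2) = ((m+1)*p) % (m+2) := by
    obtain ⟨c, hc⟩ := h1; rw [hc, Nat.add_mul_mod_self_left]
  have a2 : ((m+2)*p + q) % (m+2) = q % (m+2) := Nat.mul_add_mod _ _ _
  rw [← a1, e, a2]

lemma sign_eq (p q : ℕ) (h2 : (p+1) % 2 = (q+1) % 2) : ((-1:ℤ))^(p+1) = (-1)^(q+1) := by
  rcases Nat.even_or_odd (p+1) with he | ho
  · rw [Even.neg_one_pow he,
      Even.neg_one_pow (Nat.even_iff.2 (by rw [← h2]; exact Nat.even_iff.1 he))]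
  · rw [Odd.neg_one_pow ho,
      Odd.neg_one_pow (Nat.odd_iff.2 (by rw [← h2]; exact Nat.odd_iff.1 ho))]


theorem stmt3 (n p q : ℕ) (hn : Odd n) (hp : 1 ≤ p) (hq : 1 ≤ q)
    (hpq : p + q ≡ 0 [MOD n + 1]) :
    Submodule.map (etaA n)
        (LinearMap.range ((1 : Module.End ℤ (Fin n → ℤ)) + ((-1 : ℤ)) ^ (p + 1) • (phiA n) ^ p))
      = LinearMap.range ((1 : Module.End ℤ (Fin n → ℤ)) + ((-1 : ℤ)) ^ (q + 1) • (phiA n) ^ q) ∧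
    Nonempty
      (((Fin n → ℤ) ⧸ LinearMap.range
          ((1 : Module.End ℤ (Fin n → ℤ)) + ((-1 : ℤ)) ^ (p + 1) • (phiA n) ^ p)) ≃+
        ((Fin n → ℤ) ⧸ LinearMap.range
          ((1 : Module.End ℤ (Fin n → ℤ)) + ((-1 : ℤ)) ^ (q + 1) • (phiA n) ^ q))) := by
  obtain ⟨t, rfl⟩ := hn
  have hpq' : (p + q) % (2*t+2) = 0 := by
    have h := hpq
    simp only [Nat.ModEq, Nat.zero_mod] at h
    exact h
  have hdvd : 2 ∣ p + q := by
    obtain ⟨c, hc⟩ := Nat.dvd_of_mod_eq_zero hpq'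
    exact ⟨(t+1)*c, by rw [hc]; ring⟩
  have hsign : ((-1:ℤ))^(p+1) = (-1)^(q+1) := sign_eq p q (by omega)
  have hkey : etaA (2*t+1) * (phiA (2*t+1))^p = (phiA (2*t+1))^q * etaA (2*t+1) :=
    eta_phi_key (2*t) p q hpq'
  set ε : ℤ := ((-1:ℤ))^(p+1) with hε
  have hmain : etaA (2*t+1) * ((1 : Module.End ℤ (Fin (2*t+1) → ℤ)) + ε • (phiA (2*t+1))^p)
      = ((1 : Module.End ℤ (Fin (2*t+1) → ℤ)) + ε • (phiA (2*t+1))^q) * etaA (2*t+1) := by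
    rw [mul_add, add_mul, mul_one, one_mul, mul_smul_comm, hkey, smul_mul_assoc]
  have hsurj : Function.Surjective (etaA (2*t+1)) := by
    intro x
    exact ⟨etaA _ x, by rw [← Module.End.mul_apply, etaA_sq, Module.End.one_apply]⟩
  have hrange : Submodule.map (etaA (2*t+1))
      (LinearMap.range ((1 : Module.End ℤ (Fin (2*t+1) → ℤ)) + ε • (phiA (2*t+1))^p))
      = LinearMap.range ((1 : Module.End ℤ (Fin (2*t+1) → ℤ)) + ε • (phiA (2*t+1))^q) := by
    rw [← LinearMap.range_comp, ← Module.End.mul_eq_comp, hmain, Module.End.mul_eq_comp,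
      LinearMap.range_comp, LinearMap.range_eq_top.2 hsurj, Submodule.map_top]
  rw [← hsign]
  refine ⟨hrange, ?_⟩
  have hid : (etaA (2*t+1)) ∘ₗ (etaA (2*t+1)) = LinearMap.id := by
    rw [← Module.End.mul_eq_comp, etaA_sq]; rfl
  let e : (Fin (2*t+1) → ℤ) ≃ₗ[ℤ] (Fin (2*t+1) → ℤ) :=
    LinearEquiv.ofLinear (etaA _) (etaA _) hid hid
  exact ⟨(Submodule.Quotient.equiv _ _ e hrange).toAddEquiv⟩
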